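/- arXiv:2302.09451 — 4 statements merged into one kernel-verified Lean document; each statement's English description precedes it below -/
import Mathlib

section
/- Let Z be a real random variable with 0 < ‖Z‖_{L²} < ∞, and suppose there is a constant K₀ > 0 such that Pr(|Z| > t) ≤ exp(−t²/(K₀‖Z‖²_{L²})) for all t > 0. Then there exists a constant c > 0 depending only on K₀ such that E[|Z|] ≥ c · ‖Z‖_{L²}. Explicitly, if C > 0 is chosen so that K₀·exp(−C²/K₀) = 1/20, then E[|Z|] ≥ (9/(20C)) · ‖Z‖_{L²}. -/
/-!
Layer cake: `E[Z²] = ∫₀^∞ 2t·P(|Z| > t) dt`. On `(0, u]` bound `2t ≤ 2u`, which leaves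
`2u·E|Z|`; on `(u, ∞)` the Gaussian tail `P(|Z| > t) ≤ exp(-t²/a)` leaves
`∫ᵤ^∞ 2t·exp(-t²/a) dt = a·exp(-u²/a)`. With `σ = ‖Z‖_{L²}`, `u = Cσ` and `a = K₀σ²` this reads
`σ² ≤ 2Cσ·E|Z| + σ²/20`, i.e. `E|Z| ≥ 19σ/(40C)`.
-/

open MeasureTheory

/-- The L² norm of a real random variable: `‖Z‖_{L²} = √(E[Z²])`. -/
noncomputable def l2Norm {Ω : Type} [MeasurableSpace Ω] (μ : Measure Ω) (Z : Ω → ℝ) : ℝ :=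
  Real.sqrt (∫ ω, (Z ω) ^ 2 ∂μ)

open Real Set Filter Topology

section GaussianTail

variable {a : ℝ}

lemma hasDerivAt_neg_mul_exp_neg_sq_div (ha : a ≠ 0) (x : ℝ) :
    HasDerivAt (fun t => -a * exp (-t ^ 2 / a)) (2 * x * exp (-x ^ 2 / a)) x := by
  have h : HasDerivAt (fun t => -t ^ 2 / a) (-(2 * x) / a) x := by
    simpa using (hasDerivAt_pow 2 x).neg.div_const a
  refine (h.exp.const_mul (-a)).congr_deriv ?_
  field_simp

lemma tendsto_exp_neg_sq_div_atTop (ha : 0 < a) :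
    Tendsto (fun t => exp (-t ^ 2 / a)) atTop (𝓝 0) := by
  have h : Tendsto (fun t : ℝ => t ^ 2 / a) atTop atTop :=
    (tendsto_pow_atTop two_ne_zero).atTop_div_const ha
  simpa [Function.comp_def, neg_div] using tendsto_exp_neg_atTop_nhds_zero.comp h

lemma lintegral_Ioi_two_mul_mul_exp_neg_sq_div (ha : 0 < a) {u : ℝ} (hu : 0 ≤ u) :
    ∫⁻ t in Ioi u, ENNReal.ofReal (2 * t * exp (-t ^ 2 / a)) =
      ENNReal.ofReal (a * exp (-u ^ 2 / a)) := by
  have hderiv x (_ : x ∈ Ici u) := hasDerivAt_neg_mul_exp_neg_sq_div ha.ne' x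
  have hnonneg : ∀ x ∈ Ioi u, 0 ≤ 2 * x * exp (-x ^ 2 / a) := fun x hx => by
    have : 0 ≤ x := hu.trans hx.out.le
    positivity
  have hlim : Tendsto (fun t => -a * exp (-t ^ 2 / a)) atTop (𝓝 0) := by
    simpa using (tendsto_exp_neg_sq_div_atTop ha).const_mul (-a)
  rw [← ofReal_integral_eq_lintegral_ofReal (integrableOn_Ioi_deriv_of_nonneg' hderiv hnonneg hlim)
    ((ae_restrict_iff' measurableSet_Ioi).mpr (ae_of_all _ hnonneg)),
    integral_Ioi_of_hasDerivAt_of_nonneg' hderiv hnonneg hlim]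
  ring_nf

end GaussianTail

section SecondMoment

variable {Ω : Type*} [MeasurableSpace Ω] {μ : Measure Ω} {f : Ω → ℝ} {a u : ℝ}

lemma lintegral_sq_eq_lintegral_meas_lt_mul (hf : AEMeasurable f μ) :
    ∫⁻ ω, ENNReal.ofReal (f ω ^ 2) ∂μ =
      ∫⁻ t in Ioi 0, μ {ω | t < |f ω|} * ENNReal.ofReal (2 * t) := by
  rw [← lintegral_comp_eq_lintegral_meas_lt_mul μ (ae_of_all _ fun ω => abs_nonneg (f ω)) hf.abs
    (g := fun t => 2 * t) (fun t _ => (continuous_const.mul continuous_id).intervalIntegrable _ _)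
    ((ae_restrict_iff' measurableSet_Ioi).mpr (ae_of_all _ fun t ht => by
      have : (0 : ℝ) < t := ht
      positivity))]
  congr with ω
  rw [intervalIntegral.integral_const_mul, integral_id, sq_abs]
  ring_nf

lemma lintegral_sq_le_of_meas_lt_abs_le (hf : AEMeasurable f μ) (ha : 0 < a) (hu : 0 ≤ u)
    (htail : ∀ t, u < t → μ {ω | t < |f ω|} ≤ ENNReal.ofReal (exp (-t ^ 2 / a))) :
    ∫⁻ ω, ENNReal.ofReal (f ω ^ 2) ∂μ ≤
      ENNReal.ofReal (2 * u) * ∫⁻ ω, ENNReal.ofReal |f ω| ∂μ +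
        ENNReal.ofReal (a * exp (-u ^ 2 / a)) := by
  rw [lintegral_sq_eq_lintegral_meas_lt_mul hf, ← Ioc_union_Ioi_eq_Ioi hu,
    lintegral_union measurableSet_Ioi (Ioc_disjoint_Ioi le_rfl)]
  gcongr ?_ + ?_
  · calc ∫⁻ t in Ioc 0 u, μ {ω | t < |f ω|} * ENNReal.ofReal (2 * t)
        ≤ ∫⁻ t in Ioc 0 u, ENNReal.ofReal (2 * u) * μ {ω | t < |f ω|} :=
          setLIntegral_mono' measurableSet_Ioc fun t ht => by
            rw [mul_comm]
            gcongr
            exact ht.2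
      _ ≤ ∫⁻ t in Ioi 0, ENNReal.ofReal (2 * u) * μ {ω | t < |f ω|} :=
          lintegral_mono_set Ioc_subset_Ioi_self
      _ = ENNReal.ofReal (2 * u) * ∫⁻ ω, ENNReal.ofReal |f ω| ∂μ := by
          rw [lintegral_const_mul' _ _ ENNReal.ofReal_ne_top,
            lintegral_eq_lintegral_meas_lt μ (ae_of_all _ fun ω => abs_nonneg (f ω)) hf.abs]
  · calc ∫⁻ t in Ioi u, μ {ω | t < |f ω|} * ENNReal.ofReal (2 * t)
        ≤ ∫⁻ t in Ioi u, ENNReal.ofReal (2 * t * exp (-t ^ 2 / a)) :=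
          setLIntegral_mono' measurableSet_Ioi fun t ht => by
            have : 0 ≤ 2 * t := by linarith [ht.out]
            rw [mul_comm (2 * t), ENNReal.ofReal_mul (exp_pos _).le]
            gcongr
            exact htail t ht
      _ = ENNReal.ofReal (a * exp (-u ^ 2 / a)) := lintegral_Ioi_two_mul_mul_exp_neg_sq_div ha hu

lemma integral_sq_le_of_measureReal_lt_abs_le [IsFiniteMeasure μ] (hf : MemLp f 2 μ)
    (ha : 0 < a) (hu : 0 ≤ u) (htail : ∀ t, u < t → μ.real {ω | t < |f ω|} ≤ exp (-t ^ 2 / a)) :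
    ∫ ω, f ω ^ 2 ∂μ ≤ 2 * u * ∫ ω, |f ω| ∂μ + a * exp (-u ^ 2 / a) := by
  have hf_abs : Integrable (fun ω => |f ω|) μ := (hf.integrable one_le_two).abs
  rw [integral_eq_lintegral_of_nonneg_ae (ae_of_all _ fun ω => sq_nonneg (f ω))
    hf.integrable_sq.aestronglyMeasurable]
  refine ENNReal.toReal_le_of_le_ofReal (by positivity) ?_
  rw [ENNReal.ofReal_add (by positivity) (by positivity), ENNReal.ofReal_mul (by positivity),
    ofReal_integral_eq_lintegral_ofReal hf_abs (ae_of_all _ fun ω => abs_nonneg (f ω))]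
  refine lintegral_sq_le_of_meas_lt_abs_le hf.aestronglyMeasurable.aemeasurable ha hu
    fun t ht => ?_
  rw [← ofReal_measureReal]
  exact ENNReal.ofReal_le_ofReal (htail t ht)

end SecondMoment

lemma div_mul_l2Norm_le_integral_abs {Ω : Type} [MeasurableSpace Ω] {μ : Measure Ω}
    [IsFiniteMeasure μ] {Z : Ω → ℝ} {K C : ℝ} (hK : 0 < K) (hC : 0 < C)
    (hKC : K * exp (-C ^ 2 / K) ≤ 1 / 20) (hZ : MemLp Z 2 μ) (hσ : 0 < l2Norm μ Z)
    (htail : ∀ t, 0 < t → μ.real {ω | t < |Z ω|} ≤ exp (-t ^ 2 / (K * l2Norm μ Z ^ 2))) :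
    9 / (20 * C) * l2Norm μ Z ≤ ∫ ω, |Z ω| ∂μ := by
  set σ := l2Norm μ Z
  have hσ_sq : σ ^ 2 = ∫ ω, Z ω ^ 2 ∂μ := sq_sqrt (integral_nonneg fun ω => sq_nonneg (Z ω))
  have hCσ : 0 < C * σ := by positivity
  have h := integral_sq_le_of_measureReal_lt_abs_le hZ (by positivity) hCσ.le
    fun t ht => htail t (hCσ.trans ht)
  have hexp : K * σ ^ 2 * exp (-(C * σ) ^ 2 / (K * σ ^ 2)) = σ ^ 2 * (K * exp (-C ^ 2 / K)) := by
    field_simp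
  rw [← hσ_sq, hexp] at h
  rw [div_mul_eq_mul_div, div_le_iff₀ (by positivity)]
  nlinarith [mul_pos hσ hσ]

/-- If `Z` is a real random variable with `0 < ‖Z‖_{L²} < ∞` and Gaussian-type
tail `Pr(|Z| > t) ≤ exp(−t²/(K₀‖Z‖²_{L²}))` for all `t > 0`, then `E|Z| ≥ c‖Z‖_{L²}` for a
constant `c > 0` depending only on `K₀`; explicitly, if `C > 0` satisfies
`K₀·exp(−C²/K₀) = 1/20` then `E|Z| ≥ (9/(20C))·‖Z‖_{L²}`. -/
theorem stmt_3 (K₀ : ℝ) (hK₀ : 0 < K₀) :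
    (∃ c : ℝ, 0 < c ∧
      ∀ (Ω : Type) [MeasurableSpace Ω] (μ : Measure Ω), IsProbabilityMeasure μ →
        ∀ Z : Ω → ℝ, MemLp Z 2 μ → 0 < l2Norm μ Z →
          (∀ t : ℝ, 0 < t →
            (μ {ω | t < |Z ω|}).toReal ≤ Real.exp (-(t ^ 2) / (K₀ * (l2Norm μ Z) ^ 2))) →
          c * l2Norm μ Z ≤ ∫ ω, |Z ω| ∂μ) ∧
    (∀ C : ℝ, 0 < C → K₀ * Real.exp (-(C ^ 2) / K₀) = 1 / 20 →
      ∀ (Ω : Type) [MeasurableSpace Ω] (μ : Measure Ω), IsProbabilityMeasure μ →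
        ∀ Z : Ω → ℝ, MemLp Z 2 μ → 0 < l2Norm μ Z →
          (∀ t : ℝ, 0 < t →
            (μ {ω | t < |Z ω|}).toReal ≤ Real.exp (-(t ^ 2) / (K₀ * (l2Norm μ Z) ^ 2))) →
          (9 / (20 * C)) * l2Norm μ Z ≤ ∫ ω, |Z ω| ∂μ) := by
  have hlog : 0 < log (20 * K₀ + 1) := log_pos (by linarith)
  set C := sqrt (K₀ * log (20 * K₀ + 1))
  have hC : 0 < C := sqrt_pos.mpr (by positivity)
  have hKC : K₀ * exp (-C ^ 2 / K₀) ≤ 1 / 20 := by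
    rw [sq_sqrt (by positivity), neg_div, mul_div_cancel_left₀ _ hK₀.ne', exp_neg,
      exp_log (by linarith), ← div_eq_mul_inv, div_le_div_iff₀ (by linarith) (by norm_num)]
    linarith
  exact ⟨⟨9 / (20 * C), by positivity, fun Ω _ μ _ Z hZ hσ htail =>
      div_mul_l2Norm_le_integral_abs hK₀ hC hKC hZ hσ htail⟩,
    fun C hC hKC Ω _ μ _ Z hZ hσ htail =>
      div_mul_l2Norm_le_integral_abs hK₀ hC hKC.le hZ hσ htail⟩
end

section
/- Let (φ, y) be a random feature–reward pair in ℝ^d × ℝ with y = ⟨φ, θ⟩ + η, where η is independent of φ with E[η] = 0 and E[η²] = σ², E[φφᵀ] = I_d, and suppose the fourth-moment condition E[⟨φ,v⟩²⟨φ,u⟩²] ≤ L·E[⟨φ,v⟩²]·E[⟨φ,u⟩²] holds for all u, v ∈ ℝ^d. Let M := E[y² φφᵀ] and let A ∈ ℝ^{2d×2d} be the block matrix with upper-right block M and all other blocks zero. Then ‖A‖ = ‖M‖ ≤ L‖θ‖² + σ² and ‖A‖_F ≤ √d · (L‖θ‖² + σ²). -/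
/-!
Testing `M = E[y² φφᵀ]` against unit vectors `u, v` and using that the noise is independent of
`φ` and centred, `uᵀ M v = E[⟨φ,θ⟩² ⟨φ,u⟩⟨φ,v⟩] + σ² ⟨u,v⟩`. Writing the first integrand as
`ab` with `a = ⟨φ,θ⟩⟨φ,u⟩`, `b = ⟨φ,θ⟩⟨φ,v⟩` and using `ab ≤ (a² + b²)/2`, the fourth-moment
condition bounds it by `L‖θ‖²`; hence `‖M‖ ≤ L‖θ‖² + σ²`. The block matrix has the bilinear form
of `M` evaluated on the two halves of its arguments, so `‖A‖ = ‖M‖`, and since every column of `M`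
has norm at most `‖M‖`, `‖A‖_F = ‖M‖_F ≤ √d ‖M‖`.
-/

open MeasureTheory

/-- The operator norm of a real matrix, as the supremum of the bilinear form over the Euclidean
unit balls. -/
noncomputable def matOpNorm {ι : Type} [Fintype ι] (M : Matrix ι ι ℝ) : ℝ :=
  ⨆ q : {q : (ι → ℝ) × (ι → ℝ) // (∑ i, q.1 i ^ 2 ≤ 1) ∧ (∑ i, q.2 i ^ 2 ≤ 1)},
    ∑ i, ∑ j, q.1.1 i * M i j * q.1.2 j

/-- The Frobenius norm of a real matrix. -/
noncomputable def matFrobNorm {ι : Type} [Fintype ι] (M : Matrix ι ι ℝ) : ℝ :=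
  Real.sqrt (∑ i, ∑ j, M i j ^ 2)

open Matrix

instance : ENNReal.HolderTriple 4 4 2 := ⟨by
  rw [← ENNReal.add_halves (2⁻¹ : ENNReal), ENNReal.div_eq_inv_mul,
    ← ENNReal.mul_inv (by simp) (by simp)]
  norm_num⟩

section MatrixNorms

variable {ι : Type} [Fintype ι]

lemma abs_le_one_of_sum_sq_le_one {u : ι → ℝ} (hu : ∑ i, u i ^ 2 ≤ 1) (i : ι) : |u i| ≤ 1 :=
  (sq_le_one_iff_abs_le_one _).1 <|
    (Finset.single_le_sum (fun j _ => sq_nonneg (u j)) (Finset.mem_univ i)).trans hu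

lemma le_matOpNorm (M : Matrix ι ι ℝ) {u v : ι → ℝ} (hu : ∑ i, u i ^ 2 ≤ 1)
    (hv : ∑ i, v i ^ 2 ≤ 1) : ∑ i, ∑ j, u i * M i j * v j ≤ matOpNorm M := by
  have hbdd : BddAbove (Set.range fun q : {q : (ι → ℝ) × (ι → ℝ) //
      (∑ i, q.1 i ^ 2 ≤ 1) ∧ (∑ i, q.2 i ^ 2 ≤ 1)} => ∑ i, ∑ j, q.1.1 i * M i j * q.1.2 j) := by
    refine ⟨∑ i, ∑ j, |M i j|, ?_⟩
    rintro _ ⟨⟨⟨u, v⟩, hu, hv⟩, rfl⟩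
    refine Finset.sum_le_sum fun i _ => Finset.sum_le_sum fun j _ => ?_
    calc u i * M i j * v j ≤ |u i| * |M i j| * |v j| := by
          rw [← abs_mul, ← abs_mul]; exact le_abs_self _
      _ ≤ 1 * |M i j| * 1 := by
          gcongr
          exacts [abs_le_one_of_sum_sq_le_one hu i, abs_le_one_of_sum_sq_le_one hv j]
      _ = |M i j| := by ring
  exact le_ciSup hbdd ⟨(u, v), hu, hv⟩

lemma matOpNorm_le {M : Matrix ι ι ℝ} {B : ℝ}
    (h : ∀ u v : ι → ℝ, ∑ i, u i ^ 2 ≤ 1 → ∑ i, v i ^ 2 ≤ 1 → ∑ i, ∑ j, u i * M i j * v j ≤ B) :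
    matOpNorm M ≤ B :=
  have : Nonempty {q : (ι → ℝ) × (ι → ℝ) // (∑ i, q.1 i ^ 2 ≤ 1) ∧ (∑ i, q.2 i ^ 2 ≤ 1)} :=
    ⟨⟨0, by simp, by simp⟩⟩
  ciSup_le fun q => h _ _ q.2.1 q.2.2

lemma matOpNorm_nonneg (M : Matrix ι ι ℝ) : 0 ≤ matOpNorm M := by
  simpa using le_matOpNorm M (u := 0) (v := 0) (by simp) (by simp)

lemma sum_sq_le_sq_matOpNorm (M : Matrix ι ι ℝ) (j : ι) :
    ∑ i, M i j ^ 2 ≤ matOpNorm M ^ 2 := by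
  classical
  obtain ⟨c, hc_nonneg, hc⟩ : ∃ c : ℝ, 0 ≤ c ∧ c ^ 2 = ∑ i, M i j ^ 2 :=
    ⟨_, Real.sqrt_nonneg _, Real.sq_sqrt (by positivity)⟩
  rw [← hc]
  rcases hc_nonneg.eq_or_lt with rfl | hc_pos
  · exact pow_le_pow_left₀ le_rfl (matOpNorm_nonneg M) 2
  -- the unit vector `M·j / ‖M·j‖` tested against `e_j` realizes `‖M·j‖`
  have hu : ∑ i, (M i j / c) ^ 2 ≤ 1 := by
    simp only [div_pow, ← Finset.sum_div, ← hc]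
    rw [div_self (by positivity)]
  have hv : ∑ i, (Pi.single j 1 : ι → ℝ) i ^ 2 ≤ 1 := by simp [Pi.single_apply]
  have hval : ∑ i, ∑ k, M i j / c * M i k * (Pi.single j 1 : ι → ℝ) k = c := by
    simp only [Pi.single_apply, mul_ite, mul_one, mul_zero, Finset.sum_ite_eq',
      Finset.mem_univ, if_true]
    calc ∑ i, M i j / c * M i j = c ^ 2 / c := by
          rw [hc, Finset.sum_div]; exact Finset.sum_congr rfl fun i _ => by ring
      _ = c := by rw [sq, mul_div_cancel_right₀ _ hc_pos.ne']
  have h := le_matOpNorm M hu hv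
  rw [hval] at h
  gcongr

lemma matFrobNorm_le_sqrt_card_mul_matOpNorm (M : Matrix ι ι ℝ) :
    matFrobNorm M ≤ Real.sqrt (Fintype.card ι) * matOpNorm M := by
  rw [matFrobNorm, ← Real.sqrt_sq (matOpNorm_nonneg M), ← Real.sqrt_mul (by positivity)]
  refine Real.sqrt_le_sqrt ?_
  rw [Finset.sum_comm]
  simpa using Finset.sum_le_sum fun j (_ : j ∈ Finset.univ) => sum_sq_le_sq_matOpNorm M j

lemma bilinear_fromBlocks_zero (M : Matrix ι ι ℝ) (u v : ι ⊕ ι → ℝ) :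
    ∑ i, ∑ j, u i * fromBlocks 0 M 0 0 i j * v j =
      ∑ i, ∑ j, u (Sum.inl i) * M i j * v (Sum.inr j) := by
  simp [Fintype.sum_sum_type]

lemma sum_sq_inl_le (u : ι ⊕ ι → ℝ) : ∑ i, u (Sum.inl i) ^ 2 ≤ ∑ i, u i ^ 2 := by
  rw [Fintype.sum_sum_type]
  exact le_add_of_nonneg_right (by positivity)

lemma sum_sq_inr_le (u : ι ⊕ ι → ℝ) : ∑ i, u (Sum.inr i) ^ 2 ≤ ∑ i, u i ^ 2 := by
  rw [Fintype.sum_sum_type]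
  exact le_add_of_nonneg_left (by positivity)

lemma matOpNorm_fromBlocks_zero (M : Matrix ι ι ℝ) :
    matOpNorm (fromBlocks 0 M 0 0) = matOpNorm M := by
  refine le_antisymm (matOpNorm_le fun u v hu hv => ?_) (matOpNorm_le fun u v hu hv => ?_)
  · rw [bilinear_fromBlocks_zero]
    exact le_matOpNorm M ((sum_sq_inl_le u).trans hu) ((sum_sq_inr_le v).trans hv)
  · have h := le_matOpNorm (fromBlocks 0 M 0 0) (u := Sum.elim u 0) (v := Sum.elim 0 v)
      (by simpa [Fintype.sum_sum_type] using hu) (by simpa [Fintype.sum_sum_type] using hv)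
    simpa [bilinear_fromBlocks_zero] using h

lemma matFrobNorm_fromBlocks_zero (M : Matrix ι ι ℝ) :
    matFrobNorm (fromBlocks 0 M 0 0) = matFrobNorm M := by
  simp [matFrobNorm, Fintype.sum_sum_type]

end MatrixNorms

section Moments

variable {α : Type*} [MeasurableSpace α] {μ : Measure α}

lemma integral_mul_le_of_integral_sq_le {f g : α → ℝ} {K : ℝ} (hf : MemLp f 2 μ)
    (hg : MemLp g 2 μ) (hfK : ∫ x, f x ^ 2 ∂μ ≤ K) (hgK : ∫ x, g x ^ 2 ∂μ ≤ K) :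
    ∫ x, f x * g x ∂μ ≤ K :=
  calc ∫ x, f x * g x ∂μ ≤ ∫ x, (f x ^ 2 + g x ^ 2) / 2 ∂μ :=
        integral_mono (hf.integrable_mul hg) ((hf.integrable_sq.add hg.integrable_sq).div_const 2)
          fun x => by nlinarith [sq_nonneg (f x - g x)]
    _ = ((∫ x, f x ^ 2 ∂μ) + ∫ x, g x ^ 2 ∂μ) / 2 := by
        rw [integral_div, integral_add hf.integrable_sq hg.integrable_sq]
    _ ≤ K := by linarith

lemma sum_mul_mul_eq_integral {ι : Type*} [Fintype ι] {M : Matrix ι ι ℝ} {w : α → ℝ}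
    {F : α → ι → ℝ} (hM : ∀ i j, M i j = ∫ q, w q * (F q i * F q j) ∂μ)
    (hint : ∀ i j, Integrable (fun q => w q * (F q i * F q j)) μ) (u v : ι → ℝ) :
    ∑ i, ∑ j, u i * M i j * v j = ∫ q, w q * ((F q ⬝ᵥ u) * (F q ⬝ᵥ v)) ∂μ := by
  have hexp : (fun q => w q * ((F q ⬝ᵥ u) * (F q ⬝ᵥ v))) =
      fun q => ∑ i, ∑ j, u i * v j * (w q * (F q i * F q j)) := by
    funext q
    rw [dotProduct, dotProduct, Finset.sum_mul_sum, Finset.mul_sum]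
    refine Finset.sum_congr rfl fun i _ => ?_
    rw [Finset.mul_sum]
    exact Finset.sum_congr rfl fun j _ => by ring
  rw [hexp, integral_finsetSum _ fun i _ =>
    integrable_finsetSum _ fun j _ => (hint i j).const_mul _]
  refine Finset.sum_congr rfl fun i _ => ?_
  rw [integral_finsetSum _ fun j _ => (hint i j).const_mul _]
  refine Finset.sum_congr rfl fun j _ => ?_
  rw [integral_const_mul, ← hM]
  ring

lemma integral_dotProduct_mul_dotProduct {ι : Type*} [Fintype ι] [DecidableEq ι]
    {μ : Measure (ι → ℝ)} (hint : ∀ i j, Integrable (fun x => x i * x j) μ)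
    (hcov : ∀ i j, ∫ x, x i * x j ∂μ = if i = j then (1 : ℝ) else 0) (a b : ι → ℝ) :
    ∫ x, (x ⬝ᵥ a) * (x ⬝ᵥ b) ∂μ = a ⬝ᵥ b := by
  have h := sum_mul_mul_eq_integral (M := 1) (w := 1) (F := id) (μ := μ)
    (fun i j => by simp [Matrix.one_apply, hcov]) (fun i j => by simpa using hint i j) a b
  simpa [Matrix.one_apply, dotProduct] using h.symm

end Moments

section Noise

variable {α : Type*} [MeasurableSpace α] {μ : Measure α} [IsFiniteMeasure μ]
  {ν : Measure ℝ} [IsProbabilityMeasure ν] {f g₁ g₂ : α → ℝ}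

lemma integrable_mul_mul_of_memLp_four (hf : MemLp f 4 μ) (hg₁ : MemLp g₁ 4 μ)
    (hg₂ : MemLp g₂ 4 μ) :
    Integrable (fun x => f x ^ 2 * (g₁ x * g₂ x)) μ ∧
      Integrable (fun x => f x * (g₁ x * g₂ x)) μ ∧ Integrable (fun x => g₁ x * g₂ x) μ := by
  have h2 : ∀ {g : α → ℝ}, MemLp g 4 μ → MemLp g 2 μ := fun h => h.mono_exponent (by norm_num)
  have hfg₁ : MemLp (f * g₁) 2 μ := hg₁.mul hf
  refine ⟨?_, ?_, (h2 hg₁).integrable_mul (h2 hg₂)⟩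
  · exact (hfg₁.integrable_mul (hg₂.mul hf (r := 2))).congr
      (ae_of_all _ fun x => by simp only [Pi.mul_apply]; ring)
  · exact (hfg₁.integrable_mul (h2 hg₂)).congr
      (ae_of_all _ fun x => by simp only [Pi.mul_apply]; ring)

lemma integrable_prod_add_sq_mul_mul (hf : MemLp f 4 μ) (hg₁ : MemLp g₁ 4 μ)
    (hg₂ : MemLp g₂ 4 μ) (hν : MemLp (fun e : ℝ => e) 2 ν) :
    Integrable (fun q : α × ℝ => (f q.1 + q.2) ^ 2 * (g₁ q.1 * g₂ q.1)) (μ.prod ν) := by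
  obtain ⟨hf2h, hfh, hh⟩ := integrable_mul_mul_of_memLp_four hf hg₁ hg₂
  refine ((hf2h.mul_prod (integrable_const (1 : ℝ))).add
    (((hfh.const_mul 2).mul_prod (hν.integrable one_le_two)).add
      (hh.mul_prod hν.integrable_sq))).congr (ae_of_all _ fun q => ?_)
  simp only [Pi.add_apply]
  ring

lemma integral_prod_add_sq_mul_mul {σ : ℝ} (hf : MemLp f 4 μ) (hg₁ : MemLp g₁ 4 μ)
    (hg₂ : MemLp g₂ 4 μ) (hν : MemLp (fun e : ℝ => e) 2 ν) (hν0 : ∫ e, e ∂ν = 0)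
    (hνvar : ∫ e, e ^ 2 ∂ν = σ ^ 2) :
    ∫ q : α × ℝ, (f q.1 + q.2) ^ 2 * (g₁ q.1 * g₂ q.1) ∂(μ.prod ν) =
      ∫ x, f x ^ 2 * (g₁ x * g₂ x) ∂μ + σ ^ 2 * ∫ x, g₁ x * g₂ x ∂μ := by
  obtain ⟨hf2h, hfh, hh⟩ := integrable_mul_mul_of_memLp_four hf hg₁ hg₂
  have I1 := hf2h.mul_prod (integrable_const (1 : ℝ)) (ν := ν)
  have I2 := (hfh.const_mul 2).mul_prod (hν.integrable one_le_two)
  have I3 := hh.mul_prod hν.integrable_sq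
  have hexp : (fun q : α × ℝ => (f q.1 + q.2) ^ 2 * (g₁ q.1 * g₂ q.1)) = fun q =>
      f q.1 ^ 2 * (g₁ q.1 * g₂ q.1) * 1 + (2 * (f q.1 * (g₁ q.1 * g₂ q.1)) * q.2 +
        g₁ q.1 * g₂ q.1 * q.2 ^ 2) := by
    funext q; ring
  rw [hexp, integral_add I1 (I2.fun_add I3), integral_add I2 I3,
    integral_prod_mul (fun x => f x ^ 2 * (g₁ x * g₂ x)) (fun _ => (1 : ℝ)),
    integral_prod_mul (fun x => 2 * (f x * (g₁ x * g₂ x))) (fun e => e),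
    integral_prod_mul (fun x => g₁ x * g₂ x) (fun e => e ^ 2), hν0, hνvar]
  simp [mul_comm]

end Noise

lemma dotProduct_le_one_of_sum_sq_le_one {ι : Type*} [Fintype ι] {u v : ι → ℝ}
    (hu : ∑ i, u i ^ 2 ≤ 1) (hv : ∑ i, v i ^ 2 ≤ 1) : u ⬝ᵥ v ≤ 1 :=
  calc u ⬝ᵥ v ≤ ∑ i, (u i ^ 2 + v i ^ 2) / 2 :=
        Finset.sum_le_sum fun i _ => by nlinarith [sq_nonneg (u i - v i)]
    _ = ((∑ i, u i ^ 2) + ∑ i, v i ^ 2) / 2 := by rw [← Finset.sum_div, Finset.sum_add_distrib]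
    _ ≤ 1 := by linarith

theorem sum_mul_mul_le_of_fourthMoment_le {ι : Type} [Fintype ι] [DecidableEq ι]
    {μ : Measure (ι → ℝ)} [IsProbabilityMeasure μ] {ν : Measure ℝ} [IsProbabilityMeasure ν]
    {θ : ι → ℝ} {σ L : ℝ} (hν0 : ∫ e, e ∂ν = 0) (hνvar : ∫ e, e ^ 2 ∂ν = σ ^ 2)
    (hν : MemLp (fun e : ℝ => e) 2 ν)
    (hcov : ∀ i j, ∫ x, x i * x j ∂μ = if i = j then (1 : ℝ) else 0)
    (hL4 : ∀ v : ι → ℝ, MemLp (fun x => x ⬝ᵥ v) 4 μ)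
    (h4th : ∀ u v : ι → ℝ,
      ∫ x, (x ⬝ᵥ v) ^ 2 * (x ⬝ᵥ u) ^ 2 ∂μ ≤ L * (∫ x, (x ⬝ᵥ v) ^ 2 ∂μ) * ∫ x, (x ⬝ᵥ u) ^ 2 ∂μ)
    {M : Matrix ι ι ℝ}
    (hM : ∀ i j, M i j = ∫ q, (q.1 ⬝ᵥ θ + q.2) ^ 2 * (q.1 i * q.1 j) ∂(μ.prod ν))
    {u v : ι → ℝ} (hu : ∑ i, u i ^ 2 ≤ 1) (hv : ∑ i, v i ^ 2 ≤ 1) :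
    ∑ i, ∑ j, u i * M i j * v j ≤ L * (∑ i, θ i ^ 2) + σ ^ 2 := by
  have hcoord : ∀ i, MemLp (fun x : ι → ℝ => x i) 4 μ := fun i => by
    simpa [dotProduct_single] using hL4 (Pi.single i 1)
  have hint : ∀ i j, Integrable (fun x : ι → ℝ => x i * x j) μ := fun i j =>
    ((hcoord i).mono_exponent (p := 2) (by norm_num)).integrable_mul
      ((hcoord j).mono_exponent (p := 2) (by norm_num))
  have hsecond : ∀ a, ∫ x, (x ⬝ᵥ a) ^ 2 ∂μ = ∑ i, a i ^ 2 := fun a => by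
    simpa [sq, dotProduct] using integral_dotProduct_mul_dotProduct hint hcov a a
  have hLθ : 0 ≤ L * ∑ i, θ i ^ 2 := by
    have h := (integral_nonneg fun x => by positivity).trans (h4th θ θ)
    rw [hsecond] at h
    rcases (show 0 ≤ ∑ i, θ i ^ 2 by positivity).eq_or_lt with h0 | hpos
    · rw [← h0, mul_zero]
    · exact nonneg_of_mul_nonneg_left h hpos
  have hmix : ∀ w : ι → ℝ, ∑ i, w i ^ 2 ≤ 1 →
      ∫ x, ((x ⬝ᵥ θ) * (x ⬝ᵥ w)) ^ 2 ∂μ ≤ L * ∑ i, θ i ^ 2 := fun w hw =>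
    calc ∫ x, ((x ⬝ᵥ θ) * (x ⬝ᵥ w)) ^ 2 ∂μ = ∫ x, (x ⬝ᵥ w) ^ 2 * (x ⬝ᵥ θ) ^ 2 ∂μ := by
          simp only [mul_pow, mul_comm]
      _ ≤ (L * ∑ i, θ i ^ 2) * ∑ i, w i ^ 2 := by
          simpa only [hsecond, mul_right_comm] using h4th θ w
      _ ≤ L * ∑ i, θ i ^ 2 := mul_le_of_le_one_right hLθ hw
  have hmain : ∫ x, (x ⬝ᵥ θ) ^ 2 * ((x ⬝ᵥ u) * (x ⬝ᵥ v)) ∂μ ≤ L * ∑ i, θ i ^ 2 := by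
    have h := integral_mul_le_of_integral_sq_le ((hL4 u).mul (hL4 θ) (r := 2))
      ((hL4 v).mul (hL4 θ) (r := 2)) (hmix u hu) (hmix v hv)
    simpa only [Pi.mul_apply, mul_pow, mul_mul_mul_comm, ← sq] using h
  rw [sum_mul_mul_eq_integral hM
      (fun i j => integrable_prod_add_sq_mul_mul (hL4 θ) (hcoord i) (hcoord j) hν) u v,
    integral_prod_add_sq_mul_mul (hL4 θ) (hL4 u) (hL4 v) hν hν0 hνvar,
    integral_dotProduct_mul_dotProduct hint hcov]
  nlinarith [mul_le_mul_of_nonneg_left (dotProduct_le_one_of_sum_sq_le_one hu hv) (sq_nonneg σ)]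

/-- Let `(φ, y)` be a feature–reward pair with `y = ⟨φ,θ⟩ + η`, `η` mean-zero
with variance `σ²` independent of `φ`, `E[φφᵀ] = I_d`, and the fourth-moment condition with
constant `L`.  Let `M = E[y² φφᵀ]` and let `A` be the `2d × 2d` block matrix with upper-right
block `M` and all other blocks zero.  Then `‖A‖ = ‖M‖ ≤ L‖θ‖² + σ²` and
`‖A‖_F ≤ √d (L‖θ‖² + σ²)`. -/
theorem stmt_16 (d : ℕ) (μφ : Measure (Fin d → ℝ)) [IsProbabilityMeasure μφ]
    (νη : Measure ℝ) [IsProbabilityMeasure νη] (θ : Fin d → ℝ) (σ L : ℝ)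
    (hη0 : ∫ e, e ∂νη = 0) (hηvar : ∫ e, e ^ 2 ∂νη = σ ^ 2)
    (hηL2 : MemLp (fun e : ℝ => e) 2 νη)
    (hcov : ∀ i j, ∫ x, x i * x j ∂μφ = if i = j then (1 : ℝ) else 0)
    (hφL4 : ∀ v : Fin d → ℝ, MemLp (fun x => ∑ i, x i * v i) 4 μφ)
    (h4th : ∀ u v : Fin d → ℝ,
      ∫ x, (∑ i, x i * v i) ^ 2 * (∑ i, x i * u i) ^ 2 ∂μφ ≤
        L * (∫ x, (∑ i, x i * v i) ^ 2 ∂μφ) * (∫ x, (∑ i, x i * u i) ^ 2 ∂μφ))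
    (M : Matrix (Fin d) (Fin d) ℝ)
    (hM : ∀ i j, M i j =
      ∫ q, ((∑ k, q.1 k * θ k) + q.2) ^ 2 * (q.1 i * q.1 j) ∂(μφ.prod νη))
    (A : Matrix (Fin d ⊕ Fin d) (Fin d ⊕ Fin d) ℝ)
    (hA : A = Matrix.fromBlocks 0 M 0 0) :
    matOpNorm A = matOpNorm M ∧
    matOpNorm M ≤ L * (∑ i, θ i ^ 2) + σ ^ 2 ∧
    matFrobNorm A ≤ Real.sqrt d * (L * (∑ i, θ i ^ 2) + σ ^ 2) := by
  have hbound : ∀ u v : Fin d → ℝ, ∑ i, u i ^ 2 ≤ 1 → ∑ i, v i ^ 2 ≤ 1 →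
      ∑ i, ∑ j, u i * M i j * v j ≤ L * (∑ i, θ i ^ 2) + σ ^ 2 := fun u v hu hv =>
    sum_mul_mul_le_of_fourthMoment_le hη0 hηvar hηL2 hcov hφL4 h4th hM hu hv
  have hM_le := matOpNorm_le hbound
  subst hA
  refine ⟨matOpNorm_fromBlocks_zero M, hM_le, ?_⟩
  calc matFrobNorm (Matrix.fromBlocks 0 M 0 0) = matFrobNorm M := matFrobNorm_fromBlocks_zero M
    _ ≤ Real.sqrt (Fintype.card (Fin d)) * matOpNorm M := matFrobNorm_le_sqrt_card_mul_matOpNorm M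
    _ ≤ Real.sqrt d * (L * (∑ i, θ i ^ 2) + σ ^ 2) := by
        rw [Fintype.card_fin]
        gcongr
end

section
/- For all integers u, s, m with 1 ≤ u ≤ s and m ≥ 2s, the binomial coefficients satisfy C(s, u) · C(m − s, s − u) / C(m, s) ≤ (2·e·s² / m)^u. -/
/-!
Counting `u`-subsets of an `s`-set inside `m` points in two ways gives
`C(m, s) C(s, u) = C(m, u) C(m - u, s - u) ≥ C(m, u) C(m - s, s - u)`, so the ratio is at most
`C(s, u)² / C(m, u)`. Since `C(s, u) ≤ s^u / u!` and, for `2u ≤ m`, `C(m, u) ≥ (m / 2)^u / u!`,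
this is at most `(2 s² / m)^u / u! ≤ (2 s² / m)^u`; the factor `e` is only spare room.
-/

open Nat

namespace Nat

theorem choose_sub_mul_choose_le_choose_mul_choose {u s : ℕ} (m : ℕ) (hus : u ≤ s) :
    (m - s).choose (s - u) * m.choose u ≤ m.choose s * s.choose u := by
  rw [choose_mul hus, mul_comm]
  exact Nat.mul_le_mul_left _ (choose_le_choose _ (Nat.sub_le_sub_left hus m))

theorem factorial_mul_choose_le_pow (s u : ℕ) : u ! * s.choose u ≤ s ^ u := by
  rw [← descFactorial_eq_factorial_mul_choose]
  exact descFactorial_le_pow s u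

theorem pow_le_two_pow_mul_factorial_mul_choose {u m : ℕ} (h : 2 * u ≤ m) :
    m ^ u ≤ 2 ^ u * (u ! * m.choose u) := by
  rw [← descFactorial_eq_factorial_mul_choose]
  calc m ^ u ≤ (2 * (m + 1 - u)) ^ u := Nat.pow_le_pow_left (by omega) u
    _ ≤ 2 ^ u * m.descFactorial u := by
      rw [mul_pow]; exact Nat.mul_le_mul_left _ (pow_sub_le_descFactorial m u)

theorem choose_sq_mul_pow_le {u m : ℕ} (s : ℕ) (h : 2 * u ≤ m) :
    s.choose u ^ 2 * m ^ u ≤ (2 * s ^ 2) ^ u * m.choose u := by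
  have hsq : u ! * s.choose u ^ 2 ≤ (s ^ 2) ^ u := by
    calc u ! * s.choose u ^ 2 ≤ (u ! * s.choose u) ^ 2 := by
          rw [mul_pow]; exact Nat.mul_le_mul_right _ (Nat.le_self_pow two_ne_zero _)
      _ ≤ (s ^ u) ^ 2 := Nat.pow_le_pow_left (factorial_mul_choose_le_pow s u) 2
      _ = (s ^ 2) ^ u := by rw [← pow_mul, ← pow_mul, mul_comm]
  calc s.choose u ^ 2 * m ^ u ≤ s.choose u ^ 2 * (2 ^ u * (u ! * m.choose u)) :=
        Nat.mul_le_mul_left _ (pow_le_two_pow_mul_factorial_mul_choose h)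
    _ = 2 ^ u * m.choose u * (u ! * s.choose u ^ 2) := by ring
    _ ≤ 2 ^ u * m.choose u * (s ^ 2) ^ u := Nat.mul_le_mul_left _ hsq
    _ = (2 * s ^ 2) ^ u * m.choose u := by ring

theorem choose_mul_choose_sub_mul_pow_le {u s m : ℕ} (hus : u ≤ s) (hum : 2 * u ≤ m) :
    s.choose u * (m - s).choose (s - u) * m ^ u ≤ (2 * s ^ 2) ^ u * m.choose s := by
  refine Nat.le_of_mul_le_mul_right ?_ (choose_pos (show u ≤ m by omega))
  calc s.choose u * (m - s).choose (s - u) * m ^ u * m.choose u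
      = s.choose u * m ^ u * ((m - s).choose (s - u) * m.choose u) := by ring
    _ ≤ s.choose u * m ^ u * (m.choose s * s.choose u) :=
      Nat.mul_le_mul_left _ (choose_sub_mul_choose_le_choose_mul_choose m hus)
    _ = s.choose u ^ 2 * m ^ u * m.choose s := by ring
    _ ≤ (2 * s ^ 2) ^ u * m.choose u * m.choose s :=
      Nat.mul_le_mul_right _ (choose_sq_mul_pow_le s hum)
    _ = (2 * s ^ 2) ^ u * m.choose s * m.choose u := by ring

end Nat

theorem stmt_18_general (u s m : ℕ) (hus : u ≤ s) (hm : 2 * s ≤ m) :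
    (s.choose u : ℝ) * ((m - s).choose (s - u) : ℝ) / (m.choose s : ℝ) ≤
      (2 * Real.exp 1 * (s : ℝ) ^ 2 / (m : ℝ)) ^ u := by
  have hC : (0 : ℝ) < m.choose s := mod_cast choose_pos (by omega)
  have hmu : (0 : ℝ) < (m : ℝ) ^ u := mod_cast Nat.pow_pos_iff.2 (by omega)
  calc _ ≤ (2 * (s : ℝ) ^ 2 / m) ^ u := by
        rw [div_pow, div_le_div_iff₀ hC hmu]
        exact_mod_cast choose_mul_choose_sub_mul_pow_le hus (by omega)
    _ ≤ _ := by
        gcongr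
        exact le_mul_of_one_le_right zero_le_two (Real.one_le_exp zero_le_one)

/-- For all integers `u, s, m` with `1 ≤ u ≤ s` and `m ≥ 2s`,
`C(s, u) · C(m − s, s − u) / C(m, s) ≤ (2·e·s² / m)^u`. -/
theorem stmt_18 (u s m : ℕ) (hu : 1 ≤ u) (hus : u ≤ s) (hm : 2 * s ≤ m) :
    (s.choose u : ℝ) * ((m - s).choose (s - u) : ℝ) / (m.choose s : ℝ) ≤
      (2 * Real.exp 1 * (s : ℝ) ^ 2 / (m : ℝ)) ^ u :=
  stmt_18_general u s m hus hm
end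

section
/- For every L > 0 there exists C > 0 such that the following holds. Let G ~ N(0,1) and define X₁ := G and X₂ := G if |G| ≤ C, X₂ := −G if |G| > C. Then: (i) X₂ has the standard normal distribution N(0,1) (so both X₁ and X₂ are sub-Gaussian with absolute-constant ψ₂ norm); and (ii) the difference Z := X₁ − X₂ satisfies ‖Z‖_{ψ2} > L · ‖Z‖_{L²}. In particular, marginal sub-Gaussianity of the coordinates of a process does not imply the sub-Gaussian-increment condition ‖Z‖_{ψ2} ≤ L‖Z‖_{L²} for any fixed L; indeed ‖Z‖_{ψ2} is bounded below by an absolute positive constant while ‖Z‖²_{L²} = O(C² e^{−C²}) → 0 as C → ∞. -/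
/-!
`X₂` is again standard normal because flipping the sign on the symmetric set `{|G| > C}`
preserves any symmetric law. The increment `Z = 2G·1{|G| > C}` vanishes or has modulus
`≥ C`, so `E Z² ≤ E Z⁴ / C²`, while the `p = 4` term of the supremum defining `‖Z‖_{ψ₂}` is
`(E Z⁴)^{1/4} / 2`. Hence `‖Z‖_{L²} ≤ 2 (E Z⁴)^{1/4} ‖Z‖_{ψ₂} / C`, and `E Z⁴ ≤ 16 E G⁴` makes
this small for large `C`. The supremum dominates its `p = 4` term only because it is finite
(an unbounded `⨆` is `0`); finiteness follows from `|Z| ≤ 2|G|` and the integrability of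
`exp (c G²)` for some `c > 0` (Fernique).
-/

open MeasureTheory ProbabilityTheory

/-- The sub-Gaussian norm `‖Z‖_{ψ₂} = sup_{p ≥ 1} p^{-1/2} (E|Z|^p)^{1/p}`. -/
noncomputable def psi2Norm {Ω : Type} [MeasurableSpace Ω] (μ : Measure Ω) (Z : Ω → ℝ) : ℝ :=
  ⨆ p : {p : ℝ // 1 ≤ p}, ((p : ℝ) ^ (-(1/2) : ℝ)) * (∫ ω, |Z ω| ^ (p : ℝ) ∂μ) ^ ((p : ℝ)⁻¹)

open Real Set
open scoped NNReal

section Psi2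

variable {Ω : Type} [MeasurableSpace Ω] {μ : Measure Ω} {Z : Ω → ℝ}

noncomputable def psi2Term (μ : Measure Ω) (Z : Ω → ℝ) (p : ℝ) : ℝ :=
  p ^ (-(1/2) : ℝ) * (∫ ω, |Z ω| ^ p ∂μ) ^ p⁻¹

lemma abs_rpow_le_sqrt_rpow_mul_exp_sq {p s : ℝ} (hp : 0 < p) (hs : 0 < s) (x : ℝ) :
    |x| ^ p ≤ √(p / (2 * s)) ^ p * exp (s * x ^ 2) := by
  have hsq : x ^ 2 ≤ p / (2 * s) * exp (2 * s / p * x ^ 2) := by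
    have hexp := add_one_le_exp (2 * s / p * x ^ 2)
    have hcancel : 2 * s / p * x ^ 2 * p = 2 * s * x ^ 2 := by field_simp
    rw [div_mul_eq_mul_div, le_div_iff₀ (by positivity)]
    nlinarith
  calc |x| ^ p = √(x ^ 2) ^ p := by rw [sqrt_sq_eq_abs]
    _ ≤ √(p / (2 * s) * exp (2 * s / p * x ^ 2)) ^ p := by gcongr
    _ = √(p / (2 * s)) ^ p * exp (s * x ^ 2) := by
      rw [sqrt_mul (by positivity), mul_rpow (by positivity) (by positivity), ← exp_half,
        ← exp_mul]
      congr 2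
      field_simp

lemma psi2Term_le_of_integrable_exp_sq {s : ℝ} (hs : 0 < s)
    (hZ : Integrable (fun ω => exp (s * Z ω ^ 2)) μ) {p : ℝ} (hp : 1 ≤ p) :
    psi2Term μ Z p ≤ max 1 (∫ ω, exp (s * Z ω ^ 2) ∂μ) / √(2 * s) := by
  set M := ∫ ω, exp (s * Z ω ^ 2) ∂μ
  have hp0 : 0 < p := one_pos.trans_le hp
  have hM : 0 ≤ M := integral_nonneg fun ω => (exp_pos _).le
  have hmoment : ∫ ω, |Z ω| ^ p ∂μ ≤ √(p / (2 * s)) ^ p * M := by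
    rw [← integral_const_mul]
    exact integral_mono_of_nonneg (ae_of_all _ fun ω => by positivity) (hZ.const_mul _)
      (ae_of_all _ fun ω => abs_rpow_le_sqrt_rpow_mul_exp_sq hp0 hs (Z ω))
  have hroot : (∫ ω, |Z ω| ^ p ∂μ) ^ p⁻¹ ≤ √(p / (2 * s)) * M ^ p⁻¹ := by
    calc (∫ ω, |Z ω| ^ p ∂μ) ^ p⁻¹ ≤ (√(p / (2 * s)) ^ p * M) ^ p⁻¹ := by gcongr
      _ = √(p / (2 * s)) * M ^ p⁻¹ := by
          rw [mul_rpow (by positivity) hM, rpow_rpow_inv (by positivity) hp0.ne']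
  have hMp : M ^ p⁻¹ ≤ max 1 M := by
    rcases le_total M 1 with hM1 | hM1
    · exact (rpow_le_one hM hM1 (by positivity)).trans (le_max_left _ _)
    · calc M ^ p⁻¹ ≤ M ^ (1 : ℝ) := rpow_le_rpow_of_exponent_le hM1 (inv_le_one_of_one_le₀ hp)
        _ ≤ max 1 M := by rw [rpow_one]; exact le_max_right _ _
  calc psi2Term μ Z p ≤ p ^ (-(1/2) : ℝ) * (√(p / (2 * s)) * max 1 M) := by
        unfold psi2Term
        gcongr
        exact hroot.trans (by gcongr)
    _ = max 1 M / √(2 * s) := by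
        rw [rpow_neg hp0.le, ← sqrt_eq_rpow, sqrt_div' _ (by positivity)]
        field_simp

lemma bddAbove_psi2Term_of_integrable_exp_sq {s : ℝ} (hs : 0 < s)
    (hZ : Integrable (fun ω => exp (s * Z ω ^ 2)) μ) :
    BddAbove (range fun p : {p : ℝ // 1 ≤ p} => psi2Term μ Z p) :=
  ⟨_, forall_mem_range.2 fun p => psi2Term_le_of_integrable_exp_sq hs hZ p.2⟩

lemma psi2Term_four : psi2Term μ Z 4 = (∫ ω, Z ω ^ 4 ∂μ) ^ (4⁻¹ : ℝ) / 2 := by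
  have h4 : (4 : ℝ) ^ (-(1/2) : ℝ) = 2⁻¹ := by
    rw [rpow_neg (by norm_num), ← sqrt_eq_rpow, show (4 : ℝ) = 2 ^ 2 by norm_num,
      sqrt_sq (by norm_num)]
  have habs : ∀ ω, |Z ω| ^ (4 : ℝ) = Z ω ^ 4 := fun ω => by
    rw [show (4 : ℝ) = (4 : ℕ) by norm_num, rpow_natCast, (by decide : Even 4).pow_abs]
  simp only [psi2Term, h4, habs]
  ring

lemma l2Norm_le_of_eq_zero_or_le_abs {C : ℝ} (hC : 0 < C) (hZ : ∀ ω, Z ω = 0 ∨ C ≤ |Z ω|)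
    (hZ4 : Integrable (fun ω => Z ω ^ 4) μ) : l2Norm μ Z ≤ √(∫ ω, Z ω ^ 4 ∂μ) / C := by
  have hpt : ∀ ω, Z ω ^ 2 ≤ Z ω ^ 4 / C ^ 2 := fun ω => by
    rw [le_div_iff₀ (by positivity)]
    rcases hZ ω with h | h
    · simp [h]
    · have : C ^ 2 ≤ Z ω ^ 2 := by rw [← sq_abs (Z ω)]; gcongr
      nlinarith [sq_nonneg (Z ω)]
  calc l2Norm μ Z ≤ √(∫ ω, Z ω ^ 4 / C ^ 2 ∂μ) :=
        sqrt_le_sqrt (integral_mono_of_nonneg (ae_of_all _ fun ω => sq_nonneg _)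
          (hZ4.div_const _) (ae_of_all _ hpt))
    _ = √(∫ ω, Z ω ^ 4 ∂μ) / C := by
        rw [integral_div, sqrt_div' _ (by positivity), sqrt_sq hC.le]

theorem mul_l2Norm_lt_psi2Norm {L C : ℝ} (hL : 0 ≤ L) (hC : 0 < C)
    (hZ : ∀ ω, Z ω = 0 ∨ C ≤ |Z ω|)
    (hbdd : BddAbove (range fun p : {p : ℝ // 1 ≤ p} => psi2Term μ Z p))
    (hm : 0 < ∫ ω, Z ω ^ 4 ∂μ) (hLC : 2 * L * (∫ ω, Z ω ^ 4 ∂μ) ^ (4⁻¹ : ℝ) < C) :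
    L * l2Norm μ Z < psi2Norm μ Z := by
  set m := ∫ ω, Z ω ^ 4 ∂μ
  set q := m ^ (4⁻¹ : ℝ)
  have hq : 0 < q := rpow_pos_of_pos hm _
  have hsqrt : √m = q ^ 2 := by
    rw [sqrt_eq_rpow, ← rpow_natCast, ← rpow_mul hm.le]
    norm_num
  calc L * l2Norm μ Z ≤ L * (q ^ 2 / C) := by
        rw [← hsqrt]
        exact mul_le_mul_of_nonneg_left
          (l2Norm_le_of_eq_zero_or_le_abs hC hZ (Integrable.of_integral_ne_zero hm.ne')) hL
    _ < q / 2 := by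
        rw [mul_div_assoc', div_lt_div_iff₀ hC two_pos]
        nlinarith
    _ = psi2Term μ Z 4 := psi2Term_four.symm
    _ ≤ psi2Norm μ Z := le_ciSup hbdd ⟨4, by norm_num⟩

end Psi2

noncomputable def flipOutside (C g : ℝ) : ℝ := if |g| ≤ C then g else -g

section FlipOutside

variable {C : ℝ}

lemma measurable_flipOutside : Measurable (flipOutside C) :=
  Measurable.ite (measurableSet_le measurable_abs measurable_const) measurable_id measurable_neg

lemma map_flipOutside (μ : Measure ℝ) [μ.IsNegInvariant] (C : ℝ) : μ.map (flipOutside C) = μ := by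
  set B := {g : ℝ | |g| ≤ C}
  have hB : MeasurableSet B := measurableSet_le measurable_abs measurable_const
  ext s hs
  have hinter : flipOutside C ⁻¹' s ∩ B = s ∩ B := by
    ext g; by_cases hg : |g| ≤ C <;> simp [flipOutside, B, hg]
  have hdiff : flipOutside C ⁻¹' s \ B = -(s \ B) := by
    ext g; by_cases hg : |g| ≤ C <;> simp [flipOutside, B, hg]
  rw [Measure.map_apply measurable_flipOutside hs, ← measure_inter_add_sdiff _ hB, hinter, hdiff,
    Measure.measure_neg, measure_inter_add_sdiff _ hB]

lemma sub_flipOutside (g : ℝ) : g - flipOutside C g = if |g| ≤ C then 0 else 2 * g := by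
  unfold flipOutside; split_ifs <;> ring

lemma abs_sub_flipOutside_le (g : ℝ) : |g - flipOutside C g| ≤ 2 * |g| := by
  rw [sub_flipOutside]; split_ifs <;> simp [abs_mul]

lemma sub_flipOutside_ne_zero_iff (hC : 0 ≤ C) (g : ℝ) : g - flipOutside C g ≠ 0 ↔ C < |g| := by
  rw [sub_flipOutside]
  split_ifs with hg
  · simpa using hg
  · have : g ≠ 0 := by rintro rfl; simp_all
    simp_all

lemma sub_flipOutside_eq_zero_or_le_abs (hC : 0 ≤ C) (g : ℝ) :
    g - flipOutside C g = 0 ∨ C ≤ |g - flipOutside C g| := by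
  rw [sub_flipOutside]
  split_ifs with hg
  · exact .inl rfl
  · exact .inr (by rw [abs_mul, abs_two]; linarith)

end FlipOutside

lemma bddAbove_psi2Term_of_abs_le_mul_norm {E : Type} [NormedAddCommGroup E] [NormedSpace ℝ E]
    [MeasurableSpace E] [BorelSpace E] [SecondCountableTopology E] [CompleteSpace E]
    (μ : Measure E) [IsGaussian μ] {Z : E → ℝ} (hZm : Measurable Z) {K : ℝ} (hK : 0 < K)
    (hZ : ∀ x, |Z x| ≤ K * ‖x‖) :
    BddAbove (range fun p : {p : ℝ // 1 ≤ p} => psi2Term μ Z p) := by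
  obtain ⟨c, hc, hint⟩ := IsGaussian.exists_integrable_exp_sq μ
  refine bddAbove_psi2Term_of_integrable_exp_sq (s := c / K ^ 2) (by positivity) ?_
  refine hint.mono (by fun_prop) (ae_of_all _ fun x => ?_)
  simp only [norm_eq_abs, abs_exp, exp_le_exp]
  calc c / K ^ 2 * Z x ^ 2 = c / K ^ 2 * |Z x| ^ 2 := by rw [sq_abs]
    _ ≤ c / K ^ 2 * (K * ‖x‖) ^ 2 := by gcongr; exact hZ x
    _ = c * ‖x‖ ^ 2 := by field_simp

lemma integrable_pow_gaussianReal (m : ℝ) (v : ℝ≥0) (n : ℕ) :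
    Integrable (fun x => x ^ n) (gaussianReal m v) := by
  rcases n.eq_zero_or_pos with rfl | hn
  · simp
  · exact ((memLp_id_gaussianReal (μ := m) (v := v) n).integrable_norm_pow hn.ne').mono'
      (by fun_prop) (ae_of_all _ fun x => by simp [norm_pow])

lemma gaussianReal_lt_abs_pos (m : ℝ) {v : ℝ≥0} (hv : v ≠ 0) (C : ℝ) :
    0 < gaussianReal m v {x | C < |x|} := by
  refine pos_iff_ne_zero.2 fun h => ?_
  have hopen : IsOpen {x : ℝ | C < |x|} := isOpen_lt continuous_const continuous_abs
  refine hopen.measure_ne_zero volume ⟨|C| + 1, ?_⟩ (gaussianReal_absolutelyContinuous' m hv h)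
  show C < |(|C| + 1)|
  rw [abs_of_pos (by positivity)]
  linarith [le_abs_self C]

instance isNegInvariant_gaussianReal (v : ℝ≥0) : (gaussianReal 0 v).IsNegInvariant :=
  ⟨by rw [Measure.neg_def]; simpa using gaussianReal_map_neg (μ := 0) (v := v)⟩

section FlipOutsideGaussian

variable {C : ℝ}

lemma sub_flipOutside_pow_four_le (g : ℝ) : (g - flipOutside C g) ^ 4 ≤ 16 * g ^ 4 := by
  have h4 : Even 4 := by decide
  calc (g - flipOutside C g) ^ 4 = |g - flipOutside C g| ^ 4 := (h4.pow_abs _).symm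
    _ ≤ (2 * |g|) ^ 4 := by gcongr; exact abs_sub_flipOutside_le g
    _ = 16 * g ^ 4 := by rw [mul_pow, h4.pow_abs]; norm_num

lemma integrable_sub_flipOutside_pow_four (m : ℝ) (v : ℝ≥0) :
    Integrable (fun g => (g - flipOutside C g) ^ 4) (gaussianReal m v) :=
  ((integrable_pow_gaussianReal m v 4).const_mul 16).mono'
    ((measurable_id.sub measurable_flipOutside).pow_const 4).aestronglyMeasurable
    (ae_of_all _ fun g => by
      rw [norm_eq_abs, abs_of_nonneg (by positivity)]; exact sub_flipOutside_pow_four_le g)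

lemma integral_sub_flipOutside_pow_four_le (m : ℝ) (v : ℝ≥0) :
    ∫ g, (g - flipOutside C g) ^ 4 ∂gaussianReal m v ≤ 16 * ∫ g, g ^ 4 ∂gaussianReal m v := by
  rw [← integral_const_mul]
  exact integral_mono (integrable_sub_flipOutside_pow_four m v)
    ((integrable_pow_gaussianReal m v 4).const_mul 16) sub_flipOutside_pow_four_le

lemma integral_sub_flipOutside_pow_four_pos (hC : 0 ≤ C) (m : ℝ) {v : ℝ≥0} (hv : v ≠ 0) :
    0 < ∫ g, (g - flipOutside C g) ^ 4 ∂gaussianReal m v := by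
  rw [integral_pos_iff_support_of_nonneg (fun g => by positivity)
    (integrable_sub_flipOutside_pow_four m v)]
  convert gaussianReal_lt_abs_pos m hv C using 2
  ext g
  simp [sub_flipOutside_ne_zero_iff hC]

end FlipOutsideGaussian

/-- For every `L > 0` there exists `C > 0` such that, with `G ~ N(0,1)`,
`X₁ := G` and `X₂ := G` if `|G| ≤ C`, `X₂ := −G` otherwise:
(i) `X₂` is again standard normal, and
(ii) the difference `Z := X₁ − X₂` satisfies `‖Z‖_{ψ₂} > L · ‖Z‖_{L²}`.
Hence marginal sub-Gaussianity does not imply the sub-Gaussian-increment condition. -/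
theorem stmt_19 (L : ℝ) (hL : 0 < L) :
    ∃ C : ℝ, 0 < C ∧
      ((gaussianReal 0 1).map (fun g : ℝ => if |g| ≤ C then g else -g) = gaussianReal 0 1) ∧
      L * l2Norm (gaussianReal 0 1) (fun g => g - if |g| ≤ C then g else -g) <
        psi2Norm (gaussianReal 0 1) (fun g => g - if |g| ≤ C then g else -g) := by
  set M := ∫ g, g ^ 4 ∂gaussianReal 0 1
  refine ⟨2 * L * (16 * M) ^ (4⁻¹ : ℝ) + 1, by positivity, map_flipOutside _ _, ?_⟩
  set C := 2 * L * (16 * M) ^ (4⁻¹ : ℝ) + 1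
  have hC : 0 < C := by positivity
  have hbdd := bddAbove_psi2Term_of_abs_le_mul_norm (gaussianReal 0 1)
    (measurable_id.sub measurable_flipOutside) two_pos (abs_sub_flipOutside_le (C := C))
  refine mul_l2Norm_lt_psi2Norm hL.le hC (sub_flipOutside_eq_zero_or_le_abs hC.le) hbdd
    (integral_sub_flipOutside_pow_four_pos hC.le 0 one_ne_zero) ?_
  calc 2 * L * (∫ g, (g - flipOutside C g) ^ 4 ∂gaussianReal 0 1) ^ (4⁻¹ : ℝ)
      ≤ 2 * L * (16 * M) ^ (4⁻¹ : ℝ) := by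
        gcongr
        exact integral_sub_flipOutside_pow_four_le 0 1
    _ < C := lt_add_one _
end
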